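/- Let X₁ ~ USh(ω,η) with ω > 0, η > 0 and let X₂ have density g(x) = ω·x^(ω−1) on (0,1) (Beta(ω,1)), independent of X₁. Then P(X₂ < X₁) = ∫₀¹ f(x;ω,η)·x^ω dx = (9ω + 28η)/(18(ω+3η)). -/

import Mathlib

open MeasureTheory ProbabilityTheory Real Set

/-!
By independence, `P(X₂ < X₁) = E[F₂(X₁)]` where `F₂(x) = x ^ ω` is the Beta(ω, 1) distribution
function. Multiplying the USh density by `x ^ ω` leaves two power integrals and
`∫₀¹ log x · x ^ (3ω - 1) = -1 / (9ω²)`; the latter comes from the primitive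
`log x · x ^ c / c - x ^ c / c²`, which is continuous at `0` because `x ^ c log x → 0`.
-/

theorem continuousOn_log_mul_rpow {c : ℝ} (hc : 0 < c) :
    ContinuousOn (fun x => log x * x ^ c) (Ici 0) := by
  intro x hx
  rcases (mem_Ici.mp hx).eq_or_lt with rfl | hx0
  · rw [← continuousWithinAt_Ioi_iff_Ici, ContinuousWithinAt, log_zero, zero_mul]
    exact tendsto_log_mul_rpow_nhdsGT_zero hc
  · exact ((continuousAt_log hx0.ne').mul
      (continuousAt_rpow_const x c (Or.inl hx0.ne'))).continuousWithinAt

theorem hasDerivAt_log_mul_rpow_div_sub_rpow_div_sq {c x : ℝ} (hc : c ≠ 0) (hx : 0 < x) :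
    HasDerivAt (fun x => log x * x ^ c / c - x ^ c / c ^ 2) (log x * x ^ (c - 1)) x := by
  have hpow := hasDerivAt_rpow_const (p := c) (Or.inl hx.ne')
  refine ((((hasDerivAt_log hx.ne').mul hpow).div_const c).sub
    (hpow.div_const (c ^ 2))).congr_deriv ?_
  rw [rpow_sub_one hx.ne']
  field_simp
  ring

theorem continuousOn_log_mul_rpow_div_sub_rpow_div_sq {c : ℝ} (hc : 0 < c) :
    ContinuousOn (fun x => log x * x ^ c / c - x ^ c / c ^ 2) (Icc 0 1) :=
  (((continuousOn_log_mul_rpow hc).div_const c).sub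
    ((continuous_rpow_const hc.le).continuousOn.div_const _)).mono Icc_subset_Ici_self

theorem integrableOn_log_mul_rpow_sub_one {c : ℝ} (hc : 0 < c) :
    IntegrableOn (fun x => log x * x ^ (c - 1)) (Ioc 0 1) := by
  rw [← neg_neg (fun x => log x * x ^ (c - 1))]
  refine (intervalIntegral.integrableOn_deriv_of_nonneg
    (continuousOn_log_mul_rpow_div_sub_rpow_div_sq hc).neg
    (fun x hx => (hasDerivAt_log_mul_rpow_div_sub_rpow_div_sq hc.ne' hx.1).neg)
    (fun x hx => ?_)).neg
  exact neg_nonneg.mpr (mul_nonpos_of_nonpos_of_nonneg (log_nonpos hx.1.le hx.2.le)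
    (rpow_nonneg hx.1.le _))

theorem integral_log_mul_rpow_sub_one {c : ℝ} (hc : 0 < c) :
    ∫ x in (0:ℝ)..1, log x * x ^ (c - 1) = -(1 / c ^ 2) := by
  rw [intervalIntegral.integral_eq_sub_of_hasDerivAt_of_le zero_le_one
    (continuousOn_log_mul_rpow_div_sub_rpow_div_sq hc)
    (fun x hx => hasDerivAt_log_mul_rpow_div_sub_rpow_div_sq hc.ne' hx.1)
    ((intervalIntegrable_iff_integrableOn_Ioc_of_le zero_le_one).mpr
      (integrableOn_log_mul_rpow_sub_one hc))]
  simp [zero_rpow hc.ne']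

noncomputable def ushDensity (ω η x : ℝ) : ℝ :=
  ω / (ω + 3 * η) * (ω * x ^ (ω - 1) + (2 * η - 8 * ω * η * log x) * x ^ (2 * ω - 1))

theorem ushDensity_nonneg {ω η x : ℝ} (hω : 0 ≤ ω) (hη : 0 ≤ η) (hx : x ∈ Ioc 0 1) :
    0 ≤ ushDensity ω η x := by
  have hlog : log x ≤ 0 := log_nonpos hx.1.le hx.2
  have hcoef : 0 ≤ 2 * η - 8 * ω * η * log x := by nlinarith [mul_nonneg hω hη]
  have := rpow_nonneg hx.1.le (ω - 1)
  have := rpow_nonneg hx.1.le (2 * ω - 1)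
  unfold ushDensity
  positivity

theorem ushDensity_mul_rpow {ω η x : ℝ} (hx : 0 < x) :
    ushDensity ω η x * x ^ ω = ω / (ω + 3 * η) *
      (ω * x ^ (2 * ω - 1) + 2 * η * x ^ (3 * ω - 1) - 8 * ω * η * (log x * x ^ (3 * ω - 1))) := by
  have h2 : x ^ (ω - 1) * x ^ ω = x ^ (2 * ω - 1) := by rw [← rpow_add hx]; ring_nf
  have h3 : x ^ (2 * ω - 1) * x ^ ω = x ^ (3 * ω - 1) := by rw [← rpow_add hx]; ring_nf
  rw [ushDensity, ← h3, ← h2]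
  ring

theorem integrableOn_ushDensity_mul_rpow {ω : ℝ} (η : ℝ) (hω : 0 < ω) :
    IntegrableOn (fun x => ushDensity ω η x * x ^ ω) (Ioc 0 1) := by
  have hpow (r : ℝ) (hr : 0 < r) : IntegrableOn (fun x : ℝ => x ^ (r - 1)) (Ioc 0 1) :=
    (intervalIntegral.intervalIntegrable_rpow' (by linarith)).1
  refine IntegrableOn.congr_fun ?_ (fun x hx => (ushDensity_mul_rpow hx.1).symm) measurableSet_Ioc
  exact ((((hpow (2 * ω) (by positivity)).const_mul _).add
    ((hpow (3 * ω) (by positivity)).const_mul _)).sub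
    ((integrableOn_log_mul_rpow_sub_one (by positivity)).const_mul _)).const_mul _

theorem integral_ushDensity_mul_rpow {ω : ℝ} (η : ℝ) (hω : 0 < ω) :
    ∫ x in (0:ℝ)..1, ushDensity ω η x * x ^ ω = (9 * ω + 28 * η) / (18 * (ω + 3 * η)) := by
  have hpow (r : ℝ) (hr : 0 < r) : IntervalIntegrable (fun x : ℝ => x ^ (r - 1)) volume 0 1 :=
    intervalIntegral.intervalIntegrable_rpow' (by linarith)
  have hint (r : ℝ) (hr : 0 < r) : ∫ x in (0:ℝ)..1, x ^ (r - 1) = 1 / r := by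
    rw [integral_rpow (Or.inl (by linarith)), sub_add_cancel, one_rpow, zero_rpow hr.ne', sub_zero]
  have h2 := (hpow (2 * ω) (by positivity)).const_mul ω
  have h3 := (hpow (3 * ω) (by positivity)).const_mul (2 * η)
  have hlog : IntervalIntegrable (fun x => 8 * ω * η * (log x * x ^ (3 * ω - 1))) volume 0 1 :=
    ((intervalIntegrable_iff_integrableOn_Ioc_of_le zero_le_one).mpr
      (integrableOn_log_mul_rpow_sub_one (by positivity))).const_mul _
  rw [intervalIntegral.integral_congr_ae (ae_of_all _ fun x hx =>
      ushDensity_mul_rpow (uIoc_of_le (zero_le_one' ℝ) ▸ hx).1),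
    intervalIntegral.integral_const_mul, intervalIntegral.integral_sub (h2.add h3) hlog,
    intervalIntegral.integral_add h2 h3, intervalIntegral.integral_const_mul,
    intervalIntegral.integral_const_mul, intervalIntegral.integral_const_mul,
    hint (2 * ω) (by positivity), hint (3 * ω) (by positivity),
    integral_log_mul_rpow_sub_one (by positivity)]
  field_simp
  ring

theorem withDensity_ofReal_indicator {α : Type*} [MeasurableSpace α] {μ : Measure α}
    {s : Set α} (hs : MeasurableSet s) (f : α → ℝ) :
    μ.withDensity (fun x => ENNReal.ofReal (s.indicator f x)) =
      (μ.restrict s).withDensity (fun x => ENNReal.ofReal (f x)) := by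
  rw [← withDensity_indicator hs]
  congr 1 with x
  by_cases hx : x ∈ s <;> simp [hx]

theorem withDensity_mul_rpow_sub_one_Iio {ω x : ℝ} (hω : 0 < ω) (hx : x ∈ Icc 0 1) :
    volume.withDensity (fun y => ENNReal.ofReal ((Ioo 0 1).indicator
      (fun y => ω * y ^ (ω - 1)) y)) (Iio x) = ENNReal.ofReal (x ^ ω) := by
  have hIoo : Iio x ∩ Ioo 0 1 = Ioo 0 x := by
    rw [inter_comm, Ioo_inter_Iio, min_eq_right hx.2]
  have hint : IntegrableOn (fun y => ω * y ^ (ω - 1)) (Ioc 0 x) :=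
    ((intervalIntegral.intervalIntegrable_rpow' (by linarith)).const_mul ω).1
  rw [withDensity_ofReal_indicator measurableSet_Ioo, withDensity_apply _ measurableSet_Iio,
    Measure.restrict_restrict measurableSet_Iio, hIoo, restrict_Ioo_eq_restrict_Ioc,
    ← ofReal_integral_eq_lintegral_ofReal hint
      (ae_restrict_of_forall_mem measurableSet_Ioc fun y hy =>
        mul_nonneg hω.le (rpow_nonneg hy.1.le _)),
    ← intervalIntegral.integral_of_le hx.1, intervalIntegral.integral_const_mul,
    integral_rpow (Or.inl (by linarith)), sub_add_cancel, zero_rpow hω.ne', sub_zero,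
    mul_div_cancel₀ _ hω.ne']

theorem ProbabilityTheory.IndepFun.measure_lt_eq_lintegral_measure_Iio {Ω β : Type*}
    [MeasurableSpace Ω] {P : Measure Ω} [IsFiniteMeasure P] [MeasurableSpace β] [LinearOrder β]
    [TopologicalSpace β] [OrderClosedTopology β] [SecondCountableTopology β]
    [OpensMeasurableSpace β] {X Y : Ω → β} (hX : Measurable X) (hY : Measurable Y)
    (hind : IndepFun X Y P) :
    P {a | Y a < X a} = ∫⁻ x, P.map Y (Iio x) ∂P.map X := by
  have hs : MeasurableSet {p : β × β | p.2 < p.1} :=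
    measurableSet_lt measurable_snd measurable_fst
  calc P {a | Y a < X a} = P.map (fun a => (X a, Y a)) {p | p.2 < p.1} :=
        (Measure.map_apply (hX.prodMk hY) hs).symm
    _ = ∫⁻ x, P.map Y (Iio x) ∂P.map X := by
        rw [(indepFun_iff_map_prod_eq_prod_map_map hX.aemeasurable hY.aemeasurable).mp hind,
          Measure.prod_apply hs]
        rfl

theorem ush_beta_stress_strength {Ω : Type*} [MeasurableSpace Ω] (P : Measure Ω)
    [IsProbabilityMeasure P] (ω η : ℝ) (hω : 0 < ω) (hη : 0 < η)
    (X₁ X₂ : Ω → ℝ) (hm₁ : Measurable X₁) (hm₂ : Measurable X₂)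
    (hind : IndepFun X₁ X₂ P)
    (hlaw₁ : Measure.map X₁ P = volume.withDensity
      (fun x => ENNReal.ofReal (Set.indicator (Set.Ioc 0 1)
        (fun x => ω / (ω + 3*η) * (ω * x ^ (ω-1) + (2*η - 8*ω*η*Real.log x) * x ^ (2*ω-1))) x)))
    (hlaw₂ : Measure.map X₂ P = volume.withDensity
      (fun x => ENNReal.ofReal (Set.indicator (Set.Ioo 0 1) (fun x => ω * x ^ (ω - 1)) x))) :
    P {a | X₂ a < X₁ a} = ENNReal.ofReal ((9*ω + 28*η) / (18 * (ω + 3*η))) ∧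
    ∫ x in (0:ℝ)..1,
      (ω / (ω + 3*η) * (ω * x ^ (ω-1) + (2*η - 8*ω*η*Real.log x) * x ^ (2*ω-1))) * x ^ ω
    = (9*ω + 28*η) / (18 * (ω + 3*η)) := by
  refine ⟨?_, integral_ushDensity_mul_rpow η hω⟩
  change Measure.map X₁ P =
    volume.withDensity (fun x => ENNReal.ofReal ((Ioc 0 1).indicator (ushDensity ω η) x)) at hlaw₁
  have hmeas : Measurable fun x => ENNReal.ofReal (ushDensity ω η x) := by
    unfold ushDensity; fun_prop
  rw [hind.measure_lt_eq_lintegral_measure_Iio hm₁ hm₂, hlaw₁, hlaw₂,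
    withDensity_ofReal_indicator measurableSet_Ioc,
    lintegral_withDensity_eq_lintegral_mul_non_measurable _ hmeas
      (ae_of_all _ fun _ => ENNReal.ofReal_lt_top)]
  calc ∫⁻ x in Ioc 0 1, ENNReal.ofReal (ushDensity ω η x) * _
      = ∫⁻ x in Ioc 0 1, ENNReal.ofReal (ushDensity ω η x * x ^ ω) :=
        setLIntegral_congr_fun measurableSet_Ioc fun x hx => by
          rw [withDensity_mul_rpow_sub_one_Iio hω (Ioc_subset_Icc_self hx),
            ENNReal.ofReal_mul (ushDensity_nonneg hω.le hη.le hx)]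
    _ = ENNReal.ofReal (∫ x in Ioc 0 1, ushDensity ω η x * x ^ ω) :=
        (ofReal_integral_eq_lintegral_ofReal (integrableOn_ushDensity_mul_rpow η hω)
          (ae_restrict_of_forall_mem measurableSet_Ioc fun x hx =>
            mul_nonneg (ushDensity_nonneg hω.le hη.le hx) (rpow_nonneg hx.1.le _))).symm
    _ = _ := by
        rw [← intervalIntegral.integral_of_le zero_le_one, integral_ushDensity_mul_rpow η hω]
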